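/- Suppose the aggregation map φ satisfies the model-similarity condition: φ(s1) = φ(s2) implies, for all a ∈ A1×A2, |R(s1, a) − R(s2, a)| ≤ ε and max_{s_A' ∈ S_A} |Σ_{s' : φ(s')=s_A'} (P(s'|s1, a) − P(s'|s2, a))| ≤ ε, for some ε ≥ 0. Then the ground policy profile π_GA* induced by a Nash equilibrium π_A* of the abstract game satisfies GAP(π_GA*) ≤ 4(1 + γ(|S| − 1))·ε/(1−γ)³. -/
import Mathlib


open Finset

/-- A mixed Markov policy: a probability distribution over actions at each state. -/
def IsPolicy {S A : Type*} [Fintype A] (π : S → A → ℝ) : Prop :=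
  (∀ s a, 0 ≤ π s a) ∧ ∀ s, ∑ a, π s a = 1

/-- A transition kernel: a probability distribution over next states for every
state and joint action. -/
def IsKernel {S A1 A2 : Type*} [Fintype S] (P : S → A1 → A2 → S → ℝ) : Prop :=
  (∀ s a1 a2 s', 0 ≤ P s a1 a2 s') ∧ ∀ s a1 a2, ∑ s', P s a1 a2 s' = 1

/-- Rewards lie in `[0,1]`. -/
def IsReward {S A1 A2 : Type*} (R : S → A1 → A2 → ℝ) : Prop :=
  ∀ s a1 a2, 0 ≤ R s a1 a2 ∧ R s a1 a2 ≤ 1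

/-- The state-action value induced by a state value function `V`:
`Q(s,a) = R(s,a) + γ * Σ_{s'} P(s'|s,a) V(s')`. -/
def Qf {S A1 A2 : Type*} [Fintype S] (R : S → A1 → A2 → ℝ) (P : S → A1 → A2 → S → ℝ)
    (γ : ℝ) (V : S → ℝ) (s : S) (a1 : A1) (a2 : A2) : ℝ :=
  R s a1 a2 + γ * ∑ s', P s a1 a2 s' * V s'

/-- `V` satisfies the Bellman equation for the policy profile `(π1, π2)`. -/
def IsValue {S A1 A2 : Type*} [Fintype S] [Fintype A1] [Fintype A2]
    (R : S → A1 → A2 → ℝ) (P : S → A1 → A2 → S → ℝ) (γ : ℝ)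
    (π1 : S → A1 → ℝ) (π2 : S → A2 → ℝ) (V : S → ℝ) : Prop :=
  ∀ s, V s = ∑ a1, ∑ a2, π1 s a1 * π2 s a2 * Qf R P γ V s a1 a2

/-- `Val` assigns to every policy profile its value function. -/
def IsValueOperator {S A1 A2 : Type*} [Fintype S] [Fintype A1] [Fintype A2]
    (R : S → A1 → A2 → ℝ) (P : S → A1 → A2 → S → ℝ) (γ : ℝ)
    (Val : (S → A1 → ℝ) → (S → A2 → ℝ) → S → ℝ) : Prop :=
  ∀ π1 π2, IsPolicy π1 → IsPolicy π2 → IsValue R P γ π1 π2 (Val π1 π2)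

/-- `(π1, π2)` is a Nash equilibrium of the game whose values are given by `Val`:
for all states `s` and all policies `π1'`, `π2'`,
`Val π1 π2' s ≥ Val π1 π2 s ≥ Val π1' π2 s`. -/
def IsNash {S A1 A2 : Type*} [Fintype A1] [Fintype A2]
    (Val : (S → A1 → ℝ) → (S → A2 → ℝ) → S → ℝ)
    (π1 : S → A1 → ℝ) (π2 : S → A2 → ℝ) : Prop :=
  IsPolicy π1 ∧ IsPolicy π2 ∧
    ∀ s, ∀ π1' π2', IsPolicy π1' → IsPolicy π2' →
      Val π1 π2' s ≥ Val π1 π2 s ∧ Val π1 π2 s ≥ Val π1' π2 s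

/-- `π1d` is a best response for player 1 against the player-2 policy `π2`:
`Val π1d π2 s = max_{π1} Val π1 π2 s` for every state `s`. -/
def IsBestResponse1 {S A1 A2 : Type*} [Fintype A1]
    (Val : (S → A1 → ℝ) → (S → A2 → ℝ) → S → ℝ)
    (π1d : S → A1 → ℝ) (π2 : S → A2 → ℝ) : Prop :=
  IsPolicy π1d ∧ ∀ π1, IsPolicy π1 → ∀ s, Val π1 π2 s ≤ Val π1d π2 s

/-- A weight function for the aggregation map `φ`: weights lie in `[0,1]` and sum
to one within each aggregated class. -/
def IsAggWeight {S SA : Type*} [Fintype S] [DecidableEq SA] (φ : S → SA) (w : S → ℝ) : Prop :=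
  (∀ s, 0 ≤ w s ∧ w s ≤ 1) ∧ ∀ sA : SA, ∑ s ∈ univ.filter (fun s => φ s = sA), w s = 1

/-- The abstract transition kernel:
`P_A(s_A'|s_A,a) = Σ_{s : φ s = s_A} Σ_{s' : φ s' = s_A'} P(s'|s,a) w(s)`. -/
def PA {S SA A1 A2 : Type*} [Fintype S] [DecidableEq SA]
    (P : S → A1 → A2 → S → ℝ) (φ : S → SA) (w : S → ℝ)
    (sA : SA) (a1 : A1) (a2 : A2) (sA' : SA) : ℝ :=
  ∑ s ∈ univ.filter (fun s => φ s = sA),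
    ∑ s' ∈ univ.filter (fun s' => φ s' = sA'), P s a1 a2 s' * w s

/-- The abstract reward function:
`R_A(s_A,a) = Σ_{s : φ s = s_A} R(s,a) w(s)`. -/
def RA {S SA A1 A2 : Type*} [Fintype S] [DecidableEq SA]
    (R : S → A1 → A2 → ℝ) (φ : S → SA) (w : S → ℝ)
    (sA : SA) (a1 : A1) (a2 : A2) : ℝ :=
  ∑ s ∈ univ.filter (fun s => φ s = sA), R s a1 a2 * w s


section AuxLemmas

open Finset

lemma exp_le_const {α : Type*} [Fintype α] (μ f : α → ℝ) (c : ℝ)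
    (hμ0 : ∀ a, 0 ≤ μ a) (hμ1 : ∑ a, μ a = 1) (hf : ∀ a, f a ≤ c) :
    ∑ a, μ a * f a ≤ c := by
  calc ∑ a, μ a * f a ≤ ∑ a, μ a * c :=
        Finset.sum_le_sum fun a _ => mul_le_mul_of_nonneg_left (hf a) (hμ0 a)
    _ = c := by rw [← Finset.sum_mul, hμ1, one_mul]

lemma const_le_exp {α : Type*} [Fintype α] (μ f : α → ℝ) (c : ℝ)
    (hμ0 : ∀ a, 0 ≤ μ a) (hμ1 : ∑ a, μ a = 1) (hf : ∀ a, c ≤ f a) :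
    c ≤ ∑ a, μ a * f a := by
  calc c = ∑ a, μ a * c := by rw [← Finset.sum_mul, hμ1, one_mul]
    _ ≤ ∑ a, μ a * f a :=
        Finset.sum_le_sum fun a _ => mul_le_mul_of_nonneg_left (hf a) (hμ0 a)

lemma exp_le_exp_add {α : Type*} [Fintype α] (μ f g : α → ℝ) (c : ℝ)
    (hμ0 : ∀ a, 0 ≤ μ a) (hμ1 : ∑ a, μ a = 1) (hfg : ∀ a, f a ≤ g a + c) :
    ∑ a, μ a * f a ≤ (∑ a, μ a * g a) + c := by
  have h : ∑ a, μ a * f a ≤ ∑ a, (μ a * g a + μ a * c) := by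
    apply Finset.sum_le_sum; intro a _
    calc μ a * f a ≤ μ a * (g a + c) := mul_le_mul_of_nonneg_left (hfg a) (hμ0 a)
      _ = μ a * g a + μ a * c := mul_add _ _ _
  rwa [Finset.sum_add_distrib, ← Finset.sum_mul, hμ1, one_mul] at h

lemma dexp_eq {A1 A2 : Type*} [Fintype A1] [Fintype A2]
    (π1 : A1 → ℝ) (π2 : A2 → ℝ) (h : A1 → A2 → ℝ) :
    ∑ a1, ∑ a2, π1 a1 * π2 a2 * h a1 a2 = ∑ a1, π1 a1 * ∑ a2, π2 a2 * h a1 a2 := by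
  apply Finset.sum_congr rfl; intro a1 _
  rw [Finset.mul_sum]; apply Finset.sum_congr rfl; intro a2 _; ring

lemma dexp_eq' {A1 A2 : Type*} [Fintype A1] [Fintype A2]
    (π1 : A1 → ℝ) (π2 : A2 → ℝ) (h : A1 → A2 → ℝ) :
    ∑ a1, ∑ a2, π1 a1 * π2 a2 * h a1 a2 = ∑ a2, π2 a2 * ∑ a1, π1 a1 * h a1 a2 := by
  rw [Finset.sum_comm]
  apply Finset.sum_congr rfl; intro a2 _
  rw [Finset.mul_sum]; apply Finset.sum_congr rfl; intro a1 _; ring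

lemma dexp_le_dexp_add {A1 A2 : Type*} [Fintype A1] [Fintype A2]
    (π1 : A1 → ℝ) (π2 : A2 → ℝ) (f g : A1 → A2 → ℝ) (c : ℝ)
    (h10 : ∀ a, 0 ≤ π1 a) (h11 : ∑ a, π1 a = 1)
    (h20 : ∀ a, 0 ≤ π2 a) (h21 : ∑ a, π2 a = 1)
    (hfg : ∀ a1 a2, f a1 a2 ≤ g a1 a2 + c) :
    ∑ a1, ∑ a2, π1 a1 * π2 a2 * f a1 a2 ≤ (∑ a1, ∑ a2, π1 a1 * π2 a2 * g a1 a2) + c := by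
  rw [dexp_eq π1 π2 f, dexp_eq π1 π2 g]
  exact exp_le_exp_add π1 _ _ c h10 h11 fun a1 =>
    exp_le_exp_add π2 _ _ c h20 h21 (hfg a1)

lemma Qf_sub {T A1 A2 : Type*} [Fintype T]
    (R : T → A1 → A2 → ℝ) (P : T → A1 → A2 → T → ℝ) (γ : ℝ) (V W : T → ℝ)
    (s : T) (a1 : A1) (a2 : A2) :
    Qf R P γ V s a1 a2 - Qf R P γ W s a1 a2
      = γ * ∑ s', P s a1 a2 s' * (V s' - W s') := by
  have h : ∑ s', P s a1 a2 s' * (V s' - W s')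
      = (∑ s', P s a1 a2 s' * V s') - ∑ s', P s a1 a2 s' * W s' := by
    rw [← Finset.sum_sub_distrib]
    exact Finset.sum_congr rfl fun s' _ => mul_sub _ _ _
  simp only [Qf]; rw [h]; ring

lemma val_le_shadow {T A1 A2 : Type*} [Fintype T] [Nonempty T] [Fintype A1] [Fintype A2]
    (R : T → A1 → A2 → ℝ) (P : T → A1 → A2 → T → ℝ) (γ : ℝ)
    (hP : IsKernel P) (hγ0 : 0 ≤ γ) (hγ1 : γ < 1)
    (π1 : T → A1 → ℝ) (π2 : T → A2 → ℝ) (h1 : IsPolicy π1) (h2 : IsPolicy π2)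
    (V : T → ℝ) (hV : IsValue R P γ π1 π2 V) (W : T → ℝ) (δ : ℝ)
    (hstep : ∀ s, (∑ a1, ∑ a2, π1 s a1 * π2 s a2 * Qf R P γ W s a1 a2) ≤ W s + δ) :
    ∀ s, V s ≤ W s + δ / (1 - γ) := by
  have hx : (0:ℝ) < 1 - γ := by linarith
  obtain ⟨s0, _, hs0⟩ := Finset.exists_max_image (univ : Finset T)
    (fun s => V s - W s) univ_nonempty
  have hm : ∀ t, V t - W t ≤ V s0 - W s0 := fun t => hs0 t (mem_univ _)
  have hQ : ∀ a1 a2, Qf R P γ V s0 a1 a2 ≤ Qf R P γ W s0 a1 a2 + γ * (V s0 - W s0) := by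
    intro a1 a2
    have hl : ∑ s', P s0 a1 a2 s' * (V s' - W s') ≤ V s0 - W s0 :=
      exp_le_const _ _ _ (hP.1 s0 a1 a2) (hP.2 s0 a1 a2) hm
    have he := Qf_sub R P γ V W s0 a1 a2
    nlinarith [mul_le_mul_of_nonneg_left hl hγ0]
  have hkey : V s0 ≤ (W s0 + δ) + γ * (V s0 - W s0) := by
    calc V s0 = ∑ a1, ∑ a2, π1 s0 a1 * π2 s0 a2 * Qf R P γ V s0 a1 a2 := hV s0
      _ ≤ (∑ a1, ∑ a2, π1 s0 a1 * π2 s0 a2 * Qf R P γ W s0 a1 a2) + γ * (V s0 - W s0) :=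
          dexp_le_dexp_add _ _ _ _ _ (h1.1 s0) (h1.2 s0) (h2.1 s0) (h2.2 s0) hQ
      _ ≤ (W s0 + δ) + γ * (V s0 - W s0) := by linarith [hstep s0]
  have hD : V s0 - W s0 ≤ δ / (1 - γ) := by
    rw [le_div_iff₀ hx]; nlinarith
  intro s; linarith [hm s]

lemma val_ge_shadow {T A1 A2 : Type*} [Fintype T] [Nonempty T] [Fintype A1] [Fintype A2]
    (R : T → A1 → A2 → ℝ) (P : T → A1 → A2 → T → ℝ) (γ : ℝ)
    (hP : IsKernel P) (hγ0 : 0 ≤ γ) (hγ1 : γ < 1)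
    (π1 : T → A1 → ℝ) (π2 : T → A2 → ℝ) (h1 : IsPolicy π1) (h2 : IsPolicy π2)
    (V : T → ℝ) (hV : IsValue R P γ π1 π2 V) (W : T → ℝ) (δ : ℝ)
    (hstep : ∀ s, W s ≤ (∑ a1, ∑ a2, π1 s a1 * π2 s a2 * Qf R P γ W s a1 a2) + δ) :
    ∀ s, W s ≤ V s + δ / (1 - γ) := by
  have hx : (0:ℝ) < 1 - γ := by linarith
  obtain ⟨s0, _, hs0⟩ := Finset.exists_max_image (univ : Finset T)
    (fun s => W s - V s) univ_nonempty
  have hm : ∀ t, W t - V t ≤ W s0 - V s0 := fun t => hs0 t (mem_univ _)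
  have hQ : ∀ a1 a2, Qf R P γ W s0 a1 a2 ≤ Qf R P γ V s0 a1 a2 + γ * (W s0 - V s0) := by
    intro a1 a2
    have hl : ∑ s', P s0 a1 a2 s' * (W s' - V s') ≤ W s0 - V s0 :=
      exp_le_const _ _ _ (hP.1 s0 a1 a2) (hP.2 s0 a1 a2) hm
    have he := Qf_sub R P γ W V s0 a1 a2
    nlinarith [mul_le_mul_of_nonneg_left hl hγ0]
  have hkey : W s0 ≤ (V s0 + δ) + γ * (W s0 - V s0) := by
    calc W s0 ≤ (∑ a1, ∑ a2, π1 s0 a1 * π2 s0 a2 * Qf R P γ W s0 a1 a2) + δ := hstep s0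
      _ ≤ ((∑ a1, ∑ a2, π1 s0 a1 * π2 s0 a2 * Qf R P γ V s0 a1 a2) + γ * (W s0 - V s0)) + δ := by
          linarith [dexp_le_dexp_add (π1 s0) (π2 s0) (fun a1 a2 => Qf R P γ W s0 a1 a2)
            (fun a1 a2 => Qf R P γ V s0 a1 a2) (γ * (W s0 - V s0))
            (h1.1 s0) (h1.2 s0) (h2.1 s0) (h2.2 s0) hQ]
      _ = (V s0 + δ) + γ * (W s0 - V s0) := by rw [← hV s0]; ring
  have hD : W s0 - V s0 ≤ δ / (1 - γ) := by
    rw [le_div_iff₀ hx]; nlinarith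
  intro s; linarith [hm s]

lemma value_nonneg {T A1 A2 : Type*} [Fintype T] [Nonempty T] [Fintype A1] [Fintype A2]
    (R : T → A1 → A2 → ℝ) (P : T → A1 → A2 → T → ℝ) (γ : ℝ)
    (hP : IsKernel P) (hR : IsReward R) (hγ0 : 0 ≤ γ) (hγ1 : γ < 1)
    (π1 : T → A1 → ℝ) (π2 : T → A2 → ℝ) (h1 : IsPolicy π1) (h2 : IsPolicy π2)
    (V : T → ℝ) (hV : IsValue R P γ π1 π2 V) : ∀ s, 0 ≤ V s := by
  have h := val_ge_shadow R P γ hP hγ0 hγ1 π1 π2 h1 h2 V hV (fun _ => 0) 0 ?_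
  · intro s; have := h s; simpa using this
  · intro s
    have hQ : ∀ a1 a2, (0:ℝ) ≤ Qf R P γ (fun _ => 0) s a1 a2 := by
      intro a1 a2; simp only [Qf, mul_zero, Finset.sum_const_zero]
      have := (hR s a1 a2).1; linarith
    have h0 : (0:ℝ) ≤ ∑ a1, ∑ a2, π1 s a1 * π2 s a2 * Qf R P γ (fun _ => 0) s a1 a2 := by
      apply Finset.sum_nonneg; intro a1 _; apply Finset.sum_nonneg; intro a2 _
      exact mul_nonneg (mul_nonneg (h1.1 s a1) (h2.1 s a2)) (hQ a1 a2)
    simpa using h0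

lemma value_le_bound {T A1 A2 : Type*} [Fintype T] [Nonempty T] [Fintype A1] [Fintype A2]
    (R : T → A1 → A2 → ℝ) (P : T → A1 → A2 → T → ℝ) (γ : ℝ)
    (hP : IsKernel P) (hR : IsReward R) (hγ0 : 0 ≤ γ) (hγ1 : γ < 1)
    (π1 : T → A1 → ℝ) (π2 : T → A2 → ℝ) (h1 : IsPolicy π1) (h2 : IsPolicy π2)
    (V : T → ℝ) (hV : IsValue R P γ π1 π2 V) : ∀ s, V s ≤ 1 / (1 - γ) := by
  have h := val_le_shadow R P γ hP hγ0 hγ1 π1 π2 h1 h2 V hV (fun _ => 0) 1 ?_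
  · intro s; have := h s; simpa using this
  · intro s
    have hQ : ∀ a1 a2, Qf R P γ (fun _ => 0) s a1 a2 ≤ 1 := by
      intro a1 a2; simp only [Qf, mul_zero, Finset.sum_const_zero]
      have := (hR s a1 a2).2; linarith
    rw [dexp_eq]
    have : ∀ a1, ∑ a2, π2 s a2 * Qf R P γ (fun _ => 0) s a1 a2 ≤ 1 := fun a1 =>
      exp_le_const _ _ _ (h2.1 s) (h2.2 s) (hQ a1)
    have h0 := exp_le_const (π1 s) _ 1 (h1.1 s) (h1.2 s) this
    simpa using h0

lemma nash_onestep1 {T A1 A2 : Type*} [Fintype T] [Nonempty T] [Fintype A1] [Fintype A2]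
    (R : T → A1 → A2 → ℝ) (P : T → A1 → A2 → T → ℝ) (γ : ℝ)
    (hP : IsKernel P) (hγ0 : 0 ≤ γ) (hγ1 : γ < 1)
    (Val : (T → A1 → ℝ) → (T → A2 → ℝ) → T → ℝ)
    (hVal : IsValueOperator R P γ Val)
    (π1 : T → A1 → ℝ) (π2 : T → A2 → ℝ) (hN : IsNash Val π1 π2) :
    ∀ s a1, ∑ a2, π2 s a2 * Qf R P γ (Val π1 π2) s a1 a2 ≤ Val π1 π2 s := by
  classical
  obtain ⟨hp1, hp2, hnash⟩ := hN
  intro s a1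
  by_contra hcon
  push_neg at hcon
  set V := Val π1 π2 with hVdef
  have hVbell : IsValue R P γ π1 π2 V := hVal π1 π2 hp1 hp2
  set π1' : T → A1 → ℝ :=
    fun t a => if t = s then (if a = a1 then (1:ℝ) else 0) else π1 t a with hπ1'def
  have hp1' : IsPolicy π1' := by
    constructor
    · intro t a
      simp only [hπ1'def]
      split_ifs with h h' <;> (first | exact hp1.1 t a | norm_num)
    · intro t
      by_cases ht : t = s
      · simp [hπ1'def, ht]
      · simp only [hπ1'def, if_neg ht]; exact hp1.2 t
  set U := Val π1' π2 with hUdef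
  have hUbell : IsValue R P γ π1' π2 U := hVal π1' π2 hp1' hp2
  have hdelta : ∀ (X : T → ℝ), ∑ b1, ∑ a2, π1' s b1 * π2 s a2 * Qf R P γ X s b1 a2
      = ∑ a2, π2 s a2 * Qf R P γ X s a1 a2 := by
    intro X
    rw [Finset.sum_eq_single a1]
    · apply Finset.sum_congr rfl; intro a2 _; simp [hπ1'def]
    · intro b1 _ hb1
      apply Finset.sum_eq_zero; intro a2 _
      simp [hπ1'def, hb1]
    · intro h; exact absurd (mem_univ a1) h
  have hstepA : ∀ t, V t ≤ ∑ b1, ∑ a2, π1' t b1 * π2 t a2 * Qf R P γ V t b1 a2 := by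
    intro t
    by_cases ht : t = s
    · subst ht; rw [hdelta V]; exact le_of_lt hcon
    · have he : ∀ b1 a2, π1' t b1 * π2 t a2 * Qf R P γ V t b1 a2
          = π1 t b1 * π2 t a2 * Qf R P γ V t b1 a2 := by
        intro b1 a2; simp [hπ1'def, ht]
      apply le_of_eq
      calc V t = ∑ b1, ∑ a2, π1 t b1 * π2 t a2 * Qf R P γ V t b1 a2 := hVbell t
        _ = ∑ b1, ∑ a2, π1' t b1 * π2 t a2 * Qf R P γ V t b1 a2 := by
            apply Finset.sum_congr rfl; intro b1 _
            apply Finset.sum_congr rfl; intro a2 _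
            exact (he b1 a2).symm
  have himp : ∀ t, V t ≤ U t := by
    obtain ⟨t0, _, ht0⟩ := Finset.exists_min_image (univ : Finset T)
      (fun t => U t - V t) univ_nonempty
    have hm : ∀ t', U t0 - V t0 ≤ U t' - V t' := fun t' => ht0 t' (mem_univ _)
    have hQ : ∀ b1 a2, Qf R P γ V t0 b1 a2
        ≤ Qf R P γ U t0 b1 a2 + (-(γ * (U t0 - V t0))) := by
      intro b1 a2
      have hl : U t0 - V t0 ≤ ∑ s', P t0 b1 a2 s' * (U s' - V s') :=
        const_le_exp _ _ _ (hP.1 t0 b1 a2) (hP.2 t0 b1 a2) fun s' => hm s'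
      have he := Qf_sub R P γ U V t0 b1 a2
      nlinarith [mul_le_mul_of_nonneg_left hl hγ0]
    have hkey : V t0 ≤ U t0 + (-(γ * (U t0 - V t0))) := by
      calc V t0 ≤ ∑ b1, ∑ a2, π1' t0 b1 * π2 t0 a2 * Qf R P γ V t0 b1 a2 := hstepA t0
        _ ≤ (∑ b1, ∑ a2, π1' t0 b1 * π2 t0 a2 * Qf R P γ U t0 b1 a2)
              + (-(γ * (U t0 - V t0))) :=
            dexp_le_dexp_add _ _ _ _ _ (hp1'.1 t0) (hp1'.2 t0) (hp2.1 t0) (hp2.2 t0) hQ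
        _ = U t0 + (-(γ * (U t0 - V t0))) := by rw [← hUbell t0]
    have h0 : 0 ≤ U t0 - V t0 := by nlinarith
    intro t; linarith [hm t]
  have hUs : U s = ∑ a2, π2 s a2 * Qf R P γ U s a1 a2 := by rw [hUbell s, hdelta U]
  have hmono : ∑ a2, π2 s a2 * Qf R P γ V s a1 a2
      ≤ ∑ a2, π2 s a2 * Qf R P γ U s a1 a2 := by
    apply Finset.sum_le_sum; intro a2 _
    apply mul_le_mul_of_nonneg_left _ (hp2.1 s a2)
    have hl : ∑ s', P s a1 a2 s' * V s' ≤ ∑ s', P s a1 a2 s' * U s' :=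
      Finset.sum_le_sum fun s' _ => mul_le_mul_of_nonneg_left (himp s') (hP.1 s a1 a2 s')
    simp only [Qf]
    nlinarith [mul_le_mul_of_nonneg_left hl hγ0]
  have hnash1 : V s ≥ U s := (hnash s π1' π2 hp1' hp2).2
  linarith

lemma nash_onestep2 {T A1 A2 : Type*} [Fintype T] [Nonempty T] [Fintype A1] [Fintype A2]
    (R : T → A1 → A2 → ℝ) (P : T → A1 → A2 → T → ℝ) (γ : ℝ)
    (hP : IsKernel P) (hγ0 : 0 ≤ γ) (hγ1 : γ < 1)
    (Val : (T → A1 → ℝ) → (T → A2 → ℝ) → T → ℝ)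
    (hVal : IsValueOperator R P γ Val)
    (π1 : T → A1 → ℝ) (π2 : T → A2 → ℝ) (hN : IsNash Val π1 π2) :
    ∀ s a2, Val π1 π2 s ≤ ∑ a1, π1 s a1 * Qf R P γ (Val π1 π2) s a1 a2 := by
  classical
  obtain ⟨hp1, hp2, hnash⟩ := hN
  intro s a2
  by_contra hcon
  push_neg at hcon
  set V := Val π1 π2 with hVdef
  have hVbell : IsValue R P γ π1 π2 V := hVal π1 π2 hp1 hp2
  set π2' : T → A2 → ℝ :=
    fun t a => if t = s then (if a = a2 then (1:ℝ) else 0) else π2 t a with hπ2'def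
  have hp2' : IsPolicy π2' := by
    constructor
    · intro t a
      simp only [hπ2'def]
      split_ifs with h h' <;> (first | exact hp2.1 t a | norm_num)
    · intro t
      by_cases ht : t = s
      · simp [hπ2'def, ht]
      · simp only [hπ2'def, if_neg ht]; exact hp2.2 t
  set U := Val π1 π2' with hUdef
  have hUbell : IsValue R P γ π1 π2' U := hVal π1 π2' hp1 hp2'
  have hdelta : ∀ (X : T → ℝ), ∑ a1, ∑ b2, π1 s a1 * π2' s b2 * Qf R P γ X s a1 b2
      = ∑ a1, π1 s a1 * Qf R P γ X s a1 a2 := by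
    intro X
    apply Finset.sum_congr rfl; intro a1 _
    rw [Finset.sum_eq_single a2]
    · simp [hπ2'def]
    · intro b2 _ hb2; simp [hπ2'def, hb2]
    · intro h; exact absurd (mem_univ a2) h
  have hstepA : ∀ t, ∑ a1, ∑ b2, π1 t a1 * π2' t b2 * Qf R P γ V t a1 b2 ≤ V t := by
    intro t
    by_cases ht : t = s
    · subst ht; rw [hdelta V]; exact le_of_lt hcon
    · have he : ∀ a1 b2, π1 t a1 * π2' t b2 * Qf R P γ V t a1 b2
          = π1 t a1 * π2 t b2 * Qf R P γ V t a1 b2 := by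
        intro a1 b2; simp [hπ2'def, ht]
      apply le_of_eq
      calc ∑ a1, ∑ b2, π1 t a1 * π2' t b2 * Qf R P γ V t a1 b2
          = ∑ a1, ∑ b2, π1 t a1 * π2 t b2 * Qf R P γ V t a1 b2 := by
            apply Finset.sum_congr rfl; intro a1 _
            apply Finset.sum_congr rfl; intro b2 _
            exact he a1 b2
        _ = V t := (hVbell t).symm
  have himp : ∀ t, U t ≤ V t := by
    obtain ⟨t0, _, ht0⟩ := Finset.exists_max_image (univ : Finset T)
      (fun t => U t - V t) univ_nonempty
    have hm : ∀ t', U t' - V t' ≤ U t0 - V t0 := fun t' => ht0 t' (mem_univ _)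
    have hQ : ∀ a1 b2, Qf R P γ U t0 a1 b2
        ≤ Qf R P γ V t0 a1 b2 + γ * (U t0 - V t0) := by
      intro a1 b2
      have hl : ∑ s', P t0 a1 b2 s' * (U s' - V s') ≤ U t0 - V t0 :=
        exp_le_const _ _ _ (hP.1 t0 a1 b2) (hP.2 t0 a1 b2) fun s' => hm s'
      have he := Qf_sub R P γ U V t0 a1 b2
      nlinarith [mul_le_mul_of_nonneg_left hl hγ0]
    have hkey : U t0 ≤ V t0 + γ * (U t0 - V t0) := by
      calc U t0 = ∑ a1, ∑ b2, π1 t0 a1 * π2' t0 b2 * Qf R P γ U t0 a1 b2 := hUbell t0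
        _ ≤ (∑ a1, ∑ b2, π1 t0 a1 * π2' t0 b2 * Qf R P γ V t0 a1 b2)
              + γ * (U t0 - V t0) :=
            dexp_le_dexp_add _ _ _ _ _ (hp1.1 t0) (hp1.2 t0) (hp2'.1 t0) (hp2'.2 t0) hQ
        _ ≤ V t0 + γ * (U t0 - V t0) := by linarith [hstepA t0]
    have h0 : U t0 - V t0 ≤ 0 := by nlinarith
    intro t; linarith [hm t]
  have hUs : U s = ∑ a1, π1 s a1 * Qf R P γ U s a1 a2 := by rw [hUbell s, hdelta U]
  have hmono : ∑ a1, π1 s a1 * Qf R P γ U s a1 a2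
      ≤ ∑ a1, π1 s a1 * Qf R P γ V s a1 a2 := by
    apply Finset.sum_le_sum; intro a1 _
    apply mul_le_mul_of_nonneg_left _ (hp1.1 s a1)
    have hl : ∑ s', P s a1 a2 s' * U s' ≤ ∑ s', P s a1 a2 s' * V s' :=
      Finset.sum_le_sum fun s' _ => mul_le_mul_of_nonneg_left (himp s') (hP.1 s a1 a2 s')
    simp only [Qf]
    nlinarith [mul_le_mul_of_nonneg_left hl hγ0]
  have hnash2 : U s ≥ V s := (hnash s π1 π2' hp1 hp2').1
  linarith

lemma abs_sub_convex {ι : Type*} (t : Finset ι) (w f : ι → ℝ) (c ε : ℝ)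
    (hw0 : ∀ i ∈ t, 0 ≤ w i) (hw1 : ∑ i ∈ t, w i = 1)
    (hf : ∀ i ∈ t, |c - f i| ≤ ε) :
    |c - ∑ i ∈ t, f i * w i| ≤ ε := by
  have heq : ∑ i ∈ t, (c - f i) * w i = c - ∑ i ∈ t, f i * w i := by
    have h : ∀ i ∈ t, (c - f i) * w i = c * w i - f i * w i := fun i _ => sub_mul _ _ _
    rw [Finset.sum_congr rfl h, Finset.sum_sub_distrib, ← Finset.mul_sum, hw1, mul_one]
  rw [← heq]
  calc |∑ i ∈ t, (c - f i) * w i| ≤ ∑ i ∈ t, |(c - f i) * w i| :=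
        Finset.abs_sum_le_sum_abs _ _
    _ ≤ ∑ i ∈ t, ε * w i := by
        apply Finset.sum_le_sum; intro i hi
        rw [abs_mul, abs_of_nonneg (hw0 i hi)]
        exact mul_le_mul_of_nonneg_right (hf i hi) (hw0 i hi)
    _ = ε := by rw [← Finset.mul_sum, hw1, mul_one]

end AuxLemmas

theorem duality_gap_bound_model_similarity
    {S SA A1 A2 : Type*}
    [Fintype S] [Nonempty S] [Fintype SA] [DecidableEq SA]
    [Fintype A1] [Nonempty A1] [Fintype A2] [Nonempty A2]
    (P : S → A1 → A2 → S → ℝ) (R : S → A1 → A2 → ℝ) (γ : ℝ)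
    (hP : IsKernel P) (hR : IsReward R) (hγ0 : 0 ≤ γ) (hγ1 : γ < 1)
    (Val : (S → A1 → ℝ) → (S → A2 → ℝ) → S → ℝ)
    (hVal : IsValueOperator R P γ Val)
    (φ : S → SA) (hφ : Function.Surjective φ)
    (w : S → ℝ) (hw : IsAggWeight φ w)
    (ValA : (SA → A1 → ℝ) → (SA → A2 → ℝ) → SA → ℝ)
    (hValA : IsValueOperator (RA R φ w) (PA P φ w) γ ValA)
    (πA1 : SA → A1 → ℝ) (πA2 : SA → A2 → ℝ)
    (hNashA : IsNash ValA πA1 πA2)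
    (ε : ℝ) (hε : 0 ≤ ε)
    (hagg : ∀ s1 s2 : S, φ s1 = φ s2 → ∀ (a1 : A1) (a2 : A2),
      |R s1 a1 a2 - R s2 a1 a2| ≤ ε ∧
      ∀ sA' : SA,
        |∑ s' ∈ univ.filter (fun s' => φ s' = sA'), (P s1 a1 a2 s' - P s2 a1 a2 s')| ≤ ε)
    :
    ∀ s : S, ∀ (π1' : S → A1 → ℝ) (π2' : S → A2 → ℝ), IsPolicy π1' → IsPolicy π2' →
      Val π1' (fun s => πA2 (φ s)) s - Val (fun s => πA1 (φ s)) π2' s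
        ≤ 4 * (1 + γ * ((Fintype.card S : ℝ) - 1)) * ε / (1 - γ) ^ 3 := by
  classical
  have hx : (0:ℝ) < 1 - γ := by linarith
  haveI hSAne : Nonempty SA := ⟨φ (Classical.arbitrary S)⟩
  obtain ⟨hpA1, hpA2, hnashA⟩ := hNashA
  -- abstract model is a genuine game
  have hRA : IsReward (RA R φ w) := by
    intro sA a1 a2
    constructor
    · apply Finset.sum_nonneg; intro g _
      exact mul_nonneg (hR g a1 a2).1 (hw.1 g).1
    · calc ∑ g ∈ univ.filter (fun g => φ g = sA), R g a1 a2 * w g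
          ≤ ∑ g ∈ univ.filter (fun g => φ g = sA), w g := by
            apply Finset.sum_le_sum; intro g _
            nlinarith [(hR g a1 a2).1, (hR g a1 a2).2, (hw.1 g).1]
        _ = 1 := hw.2 sA
  have hPA : IsKernel (PA P φ w) := by
    constructor
    · intro sA a1 a2 sA'
      apply Finset.sum_nonneg; intro g _
      apply Finset.sum_nonneg; intro s' _
      exact mul_nonneg (hP.1 g a1 a2 s') (hw.1 g).1
    · intro sA a1 a2
      simp only [PA]
      rw [Finset.sum_comm]
      calc ∑ g ∈ univ.filter (fun g => φ g = sA),
            ∑ sA', ∑ s' ∈ univ.filter (fun s' => φ s' = sA'), P g a1 a2 s' * w g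
          = ∑ g ∈ univ.filter (fun g => φ g = sA), w g := by
            apply Finset.sum_congr rfl; intro g _
            rw [Finset.sum_fiberwise univ φ (fun s' => P g a1 a2 s' * w g),
              ← Finset.sum_mul, hP.2 g a1 a2, one_mul]
        _ = 1 := hw.2 sA
  set VA := ValA πA1 πA2 with hVAdef
  have hVAbell : IsValue (RA R φ w) (PA P φ w) γ πA1 πA2 VA := hValA πA1 πA2 hpA1 hpA2
  have hVA0 : ∀ sA, 0 ≤ VA sA :=
    value_nonneg _ _ γ hPA hRA hγ0 hγ1 πA1 πA2 hpA1 hpA2 VA hVAbell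
  have hVAB : ∀ sA, VA sA ≤ 1 / (1 - γ) :=
    value_le_bound _ _ γ hPA hRA hγ0 hγ1 πA1 πA2 hpA1 hpA2 VA hVAbell
  have hns1 : ∀ sA a1, ∑ a2, πA2 sA a2 * Qf (RA R φ w) (PA P φ w) γ VA sA a1 a2 ≤ VA sA :=
    nash_onestep1 _ _ γ hPA hγ0 hγ1 ValA hValA πA1 πA2 ⟨hpA1, hpA2, hnashA⟩
  have hns2 : ∀ sA a2, VA sA ≤ ∑ a1, πA1 sA a1 * Qf (RA R φ w) (PA P φ w) γ VA sA a1 a2 :=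
    nash_onestep2 _ _ γ hPA hγ0 hγ1 ValA hValA πA1 πA2 ⟨hpA1, hpA2, hnashA⟩
  set W : S → ℝ := fun s => VA (φ s) with hWdef
  set δQ : ℝ := ε + γ * ((Fintype.card SA : ℝ) * ε * (1 / (1 - γ))) with hδQdef
  -- Q difference bound
  have hQdiff : ∀ s a1 a2,
      |Qf R P γ W s a1 a2 - Qf (RA R φ w) (PA P φ w) γ VA (φ s) a1 a2| ≤ δQ := by
    intro s a1 a2
    have hRd : |R s a1 a2 - RA R φ w (φ s) a1 a2| ≤ ε := by
      apply abs_sub_convex _ w (fun g => R g a1 a2) _ ε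
        (fun i _ => (hw.1 i).1) (hw.2 (φ s))
      intro g hg
      have hgs : φ g = φ s := (mem_filter.mp hg).2
      exact (hagg s g hgs.symm a1 a2).1
    have hPd : ∀ sA', |(∑ s' ∈ univ.filter (fun s' => φ s' = sA'), P s a1 a2 s')
        - PA P φ w (φ s) a1 a2 sA'| ≤ ε := by
      intro sA'
      have hPAform : PA P φ w (φ s) a1 a2 sA'
          = ∑ g ∈ univ.filter (fun g => φ g = φ s),
              (∑ s' ∈ univ.filter (fun s' => φ s' = sA'), P g a1 a2 s') * w g := by
        simp only [PA]
        apply Finset.sum_congr rfl; intro g _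
        rw [Finset.sum_mul]
      rw [hPAform]
      apply abs_sub_convex _ w
        (fun g => ∑ s' ∈ univ.filter (fun s' => φ s' = sA'), P g a1 a2 s') _ ε
        (fun i _ => (hw.1 i).1) (hw.2 (φ s))
      intro g hg
      have hgs : φ g = φ s := (mem_filter.mp hg).2
      have h2 := ((hagg s g hgs.symm a1 a2).2) sA'
      rw [Finset.sum_sub_distrib] at h2
      exact h2
    have hTd : |(∑ s', P s a1 a2 s' * VA (φ s'))
        - ∑ sA', PA P φ w (φ s) a1 a2 sA' * VA sA'|
        ≤ (Fintype.card SA : ℝ) * ε * (1 / (1 - γ)) := by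
      have hgd : ∑ s', P s a1 a2 s' * VA (φ s')
          = ∑ sA', (∑ s' ∈ univ.filter (fun s' => φ s' = sA'), P s a1 a2 s') * VA sA' := by
        rw [← Finset.sum_fiberwise univ φ (fun s' => P s a1 a2 s' * VA (φ s'))]
        apply Finset.sum_congr rfl; intro sA' _
        rw [Finset.sum_mul]
        apply Finset.sum_congr rfl; intro s' hs'
        rw [(mem_filter.mp hs').2]
      rw [hgd, ← Finset.sum_sub_distrib]
      calc |∑ sA', ((∑ s' ∈ univ.filter (fun s' => φ s' = sA'), P s a1 a2 s') * VA sA'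
              - PA P φ w (φ s) a1 a2 sA' * VA sA')|
          ≤ ∑ sA', |(∑ s' ∈ univ.filter (fun s' => φ s' = sA'), P s a1 a2 s') * VA sA'
              - PA P φ w (φ s) a1 a2 sA' * VA sA'| := Finset.abs_sum_le_sum_abs _ _
        _ ≤ ∑ _sA' : SA, ε * (1 / (1 - γ)) := by
            apply Finset.sum_le_sum; intro sA' _
            rw [← sub_mul, abs_mul]
            apply mul_le_mul (hPd sA') _ (abs_nonneg _) hε
            rw [abs_of_nonneg (hVA0 sA')]
            exact hVAB sA'
        _ = (Fintype.card SA : ℝ) * ε * (1 / (1 - γ)) := by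
            rw [Finset.sum_const, Finset.card_univ, nsmul_eq_mul]; ring
    have hsplit : Qf R P γ W s a1 a2 - Qf (RA R φ w) (PA P φ w) γ VA (φ s) a1 a2
        = (R s a1 a2 - RA R φ w (φ s) a1 a2)
          + γ * ((∑ s', P s a1 a2 s' * VA (φ s'))
            - ∑ sA', PA P φ w (φ s) a1 a2 sA' * VA sA') := by
      simp only [Qf, hWdef]; ring
    rw [hsplit, hδQdef]
    calc |(R s a1 a2 - RA R φ w (φ s) a1 a2)
            + γ * ((∑ s', P s a1 a2 s' * VA (φ s'))
              - ∑ sA', PA P φ w (φ s) a1 a2 sA' * VA sA')|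
        ≤ |R s a1 a2 - RA R φ w (φ s) a1 a2|
            + |γ * ((∑ s', P s a1 a2 s' * VA (φ s'))
              - ∑ sA', PA P φ w (φ s) a1 a2 sA' * VA sA')| := abs_add_le _ _
      _ ≤ ε + γ * ((Fintype.card SA : ℝ) * ε * (1 / (1 - γ))) := by
          rw [abs_mul, abs_of_nonneg hγ0]
          exact add_le_add hRd (mul_le_mul_of_nonneg_left hTd hγ0)
  intro s π1' π2' hp1' hp2'
  have hπG1 : IsPolicy (fun s : S => πA1 (φ s)) := ⟨fun t a => hpA1.1 (φ t) a, fun t => hpA1.2 (φ t)⟩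
  have hπG2 : IsPolicy (fun s : S => πA2 (φ s)) := ⟨fun t a => hpA2.1 (φ t) a, fun t => hpA2.2 (φ t)⟩
  -- part 1: Val π1' πG2 ≤ W + δQ/(1-γ)
  have hstep1 : ∀ t, (∑ a1, ∑ a2, π1' t a1 * πA2 (φ t) a2 * Qf R P γ W t a1 a2)
      ≤ W t + δQ := by
    intro t
    have hinner : ∀ a1, ∑ a2, πA2 (φ t) a2 * Qf R P γ W t a1 a2 ≤ W t + δQ := by
      intro a1
      have h1 : ∑ a2, πA2 (φ t) a2 * Qf R P γ W t a1 a2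
          ≤ (∑ a2, πA2 (φ t) a2 * Qf (RA R φ w) (PA P φ w) γ VA (φ t) a1 a2) + δQ := by
        apply exp_le_exp_add _ _ _ _ (hpA2.1 (φ t)) (hpA2.2 (φ t))
        intro a2
        have := hQdiff t a1 a2
        have h2 := abs_le.mp this
        linarith [h2.2]
      have h3 := hns1 (φ t) a1
      calc ∑ a2, πA2 (φ t) a2 * Qf R P γ W t a1 a2
          ≤ (∑ a2, πA2 (φ t) a2 * Qf (RA R φ w) (PA P φ w) γ VA (φ t) a1 a2) + δQ := h1
        _ ≤ VA (φ t) + δQ := by linarith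
        _ = W t + δQ := rfl
    rw [dexp_eq]
    exact exp_le_const _ _ _ (hp1'.1 t) (hp1'.2 t) hinner
  have hVbell1 : IsValue R P γ π1' (fun s => πA2 (φ s)) (Val π1' (fun s => πA2 (φ s))) :=
    hVal π1' _ hp1' hπG2
  have hup := val_le_shadow R P γ hP hγ0 hγ1 π1' _ hp1' hπG2 _ hVbell1 W δQ hstep1 s
  -- part 2: W - δQ/(1-γ) ≤ Val πG1 π2'
  have hstep2 : ∀ t, W t ≤ (∑ a1, ∑ a2, πA1 (φ t) a1 * π2' t a2 * Qf R P γ W t a1 a2)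
      + δQ := by
    intro t
    have hinner : ∀ a2, W t - δQ ≤ ∑ a1, πA1 (φ t) a1 * Qf R P γ W t a1 a2 := by
      intro a2
      have h1 : ∑ a1, πA1 (φ t) a1 * Qf (RA R φ w) (PA P φ w) γ VA (φ t) a1 a2
          ≤ (∑ a1, πA1 (φ t) a1 * Qf R P γ W t a1 a2) + δQ := by
        apply exp_le_exp_add _ _ _ _ (hpA1.1 (φ t)) (hpA1.2 (φ t))
        intro a1
        have := hQdiff t a1 a2
        have h2 := abs_le.mp this
        linarith [h2.1]
      have h3 := hns2 (φ t) a2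
      have : VA (φ t) ≤ (∑ a1, πA1 (φ t) a1 * Qf R P γ W t a1 a2) + δQ := le_trans h3 h1
      have hWt : W t = VA (φ t) := rfl
      linarith
    have h4 : W t - δQ ≤ ∑ a2, π2' t a2 * ∑ a1, πA1 (φ t) a1 * Qf R P γ W t a1 a2 :=
      const_le_exp _ _ _ (hp2'.1 t) (hp2'.2 t) hinner
    rw [dexp_eq']
    linarith
  have hVbell2 : IsValue R P γ (fun s => πA1 (φ s)) π2' (Val (fun s => πA1 (φ s)) π2') :=
    hVal _ π2' hπG1 hp2'
  have hdn := val_ge_shadow R P γ hP hγ0 hγ1 _ π2' hπG1 hp2' _ hVbell2 W δQ hstep2 s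
  -- combine
  have hcomb : Val π1' (fun s => πA2 (φ s)) s - Val (fun s => πA1 (φ s)) π2' s
      ≤ 2 * δQ / (1 - γ) := by
    have : 2 * δQ / (1 - γ) = δQ / (1 - γ) + δQ / (1 - γ) := by ring
    rw [this]
    linarith
  refine le_trans hcomb ?_
  -- arithmetic
  have hm : (Fintype.card SA : ℝ) ≤ (Fintype.card S : ℝ) := by
    exact_mod_cast Fintype.card_le_of_surjective φ hφ
  have hm0 : (0:ℝ) ≤ (Fintype.card SA : ℝ) := by positivity
  have hn1 : (1:ℝ) ≤ (Fintype.card S : ℝ) := by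
    exact_mod_cast Fintype.card_pos
  set m := (Fintype.card SA : ℝ)
  set n := (Fintype.card S : ℝ)
  rw [div_le_div_iff₀ hx (by positivity : (0:ℝ) < (1 - γ)^3)]
  have hδexp : 2 * δQ * (1 - γ) ^ 3
      = 2 * ε * (1 - γ) ^ 3 + 2 * γ * m * ε * (1 - γ) ^ 2 := by
    rw [hδQdef]
    field_simp
  rw [hδexp]
  have hγle1 : γ ≤ 1 := le_of_lt hγ1
  nlinarith [mul_nonneg hε hγ0, mul_nonneg (mul_nonneg hε hγ0) (sub_nonneg.mpr hm),
    mul_nonneg (mul_nonneg hε hγ0) (sub_nonneg.mpr hn1),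
    mul_nonneg hε (sq_nonneg (1 - γ)), sq_nonneg (1 - γ),
    mul_nonneg (mul_nonneg hε hγ0) hm0,
    mul_nonneg (mul_nonneg (mul_nonneg hε hγ0) hm0) (sub_nonneg.mpr hγle1),
    mul_nonneg (mul_nonneg (mul_nonneg hε hγ0) (sub_nonneg.mpr hm)) hx.le,
    mul_nonneg hε hx.le, mul_nonneg (mul_nonneg hε hx.le) hx.le,
    mul_nonneg (mul_nonneg (mul_nonneg hε hx.le) hx.le) hx.le]
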